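/- If there exist two cospectral graphs G and H (with respect to the adjacency matrix) with b(G) ≠ b(H) and each admitting an optimal burning sequence ending in a redundant source, then for every n ≥ 2 the graphs G ⊠ K_n and H ⊠ K_n are cospectral and satisfy b(G ⊠ K_n) ≠ b(H ⊠ K_n); hence there are infinitely many pairs of cospectral graphs with different burning numbers. -/

import Mathlib

/-- Zero forcing closure: vertices eventually colored blue. -/
inductive SimpleGraph.Forced {V : Type*} (G : SimpleGraph V) (B : Set V) : V → Prop
  | init (v : V) (hv : v ∈ B) : SimpleGraph.Forced G B v
  | force (v w : V) (hv : SimpleGraph.Forced G B v) (hadj : G.Adj v w)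
      (hall : ∀ u, G.Adj v u → u ≠ w → SimpleGraph.Forced G B u) : SimpleGraph.Forced G B w

def SimpleGraph.IsZeroForcingSet {V : Type*} (G : SimpleGraph V) (B : Set V) : Prop :=
  ∀ v, G.Forced B v

noncomputable def SimpleGraph.zeroForcingNumber {V : Type*} (G : SimpleGraph V) : ℕ :=
  sInf {n | ∃ B : Set V, B.ncard = n ∧ G.IsZeroForcingSet B}

/-- closed ball of radius r -/
def SimpleGraph.closedBall {V : Type*} (G : SimpleGraph V) (v : V) (r : ℕ) : Set V :=
  {w | G.edist v w ≤ (r : ℕ∞)}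

/-- Burning sequence (alternative characterization). -/
def SimpleGraph.IsBurningSeq {V : Type*} (G : SimpleGraph V) {k : ℕ} (s : Fin k → V) : Prop :=
  (∀ i j : Fin k, i ≠ j →
      ((((i : ℕ) : ℤ) - ((j : ℕ) : ℤ)).natAbs : ℕ∞) ≤ G.edist (s i) (s j)) ∧
  (⋃ l : Fin k, G.closedBall (s l) (k - 1 - (l : ℕ))) = Set.univ

noncomputable def SimpleGraph.burningNumber {V : Type*} (G : SimpleGraph V) : ℕ :=
  sInf {k | ∃ s : Fin k → V, G.IsBurningSeq s}

/-- Strong product of graphs. -/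
def SimpleGraph.strongProd {α β : Type*} (G : SimpleGraph α) (H : SimpleGraph β) :
    SimpleGraph (α × β) where
  Adj x y := (x.1 = y.1 ∧ H.Adj x.2 y.2) ∨ (x.2 = y.2 ∧ G.Adj x.1 y.1) ∨
    (G.Adj x.1 y.1 ∧ H.Adj x.2 y.2)
  symm := by
    constructor
    rintro ⟨a, b⟩ ⟨c, d⟩ (⟨h1, h2⟩ | ⟨h1, h2⟩ | ⟨h1, h2⟩)
    · exact Or.inl ⟨h1.symm, h2.symm⟩
    · exact Or.inr (Or.inl ⟨h1.symm, h2.symm⟩)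
    · exact Or.inr (Or.inr ⟨h1.symm, h2.symm⟩)
  loopless := by
    constructor
    rintro ⟨a, b⟩ (⟨_, h2⟩ | ⟨_, h2⟩ | ⟨h1, _⟩)
    exacts [H.loopless.irrefl b h2, G.loopless.irrefl a h2, G.loopless.irrefl a h1]

instance {α β : Type*} (G : SimpleGraph α) (H : SimpleGraph β)
    [DecidableEq α] [DecidableEq β] [DecidableRel G.Adj] [DecidableRel H.Adj] :
    DecidableRel (G.strongProd H).Adj :=
  fun _ _ => inferInstanceAs (Decidable (_ ∨ _ ∨ _))

section Hypergraph
variable {V : Type*} [DecidableEq V]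

/-- Lazy burning closure on a hypergraph given by its edge set. -/
inductive LazyBurned (E : Finset (Finset V)) (B : Set V) : V → Prop
  | init (v : V) (hv : v ∈ B) : LazyBurned E B v
  | spread (v : V) (h : Finset V) (hE : h ∈ E) (hcard : 2 ≤ h.card) (hv : v ∈ h)
      (hall : ∀ u ∈ h, u ≠ v → LazyBurned E B u) : LazyBurned E B v

def IsLazyBurningSet (E : Finset (Finset V)) (B : Set V) : Prop := ∀ v, LazyBurned E B v

noncomputable def lazyBurningNumber (E : Finset (Finset V)) : ℕ :=
  sInf {n | ∃ B : Set V, B.ncard = n ∧ IsLazyBurningSet E B}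

/-- one round of propagation in hypergraph burning -/
def hSpread (E : Finset (Finset V)) (S : Set V) : Set V :=
  S ∪ {v | ∃ h ∈ E, 2 ≤ h.card ∧ v ∈ h ∧ ∀ u ∈ h, u ≠ v → u ∈ S}

/-- burned vertices after t rounds of the (round-based) hypergraph burning process -/
def hBurnedAt (E : Finset (Finset V)) {k : ℕ} (s : Fin k → V) : ℕ → Set V
  | 0 => ∅
  | t + 1 => hSpread E (hBurnedAt E s t) ∪ {v | ∃ ht : t < k, v = s ⟨t, ht⟩}

noncomputable def hBurningNumber (E : Finset (Finset V)) : ℕ :=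
  sInf {k | ∃ s : Fin k → V,
    (∀ t : Fin k, s t ∉ hBurnedAt E s (t : ℕ)) ∧ hBurnedAt E s k = Set.univ}

/-- incidence graph of a hypergraph -/
def IG (E : Finset (Finset V)) : SimpleGraph (V ⊕ {h // h ∈ E}) where
  Adj x y := (∃ v h, x = Sum.inl v ∧ y = Sum.inr h ∧ v ∈ (h : Finset V)) ∨
    (∃ v h, x = Sum.inr h ∧ y = Sum.inl v ∧ v ∈ (h : Finset V))
  symm := by
    constructor
    rintro x y (⟨v, h, rfl, rfl, hm⟩ | ⟨v, h, rfl, rfl, hm⟩)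
    · exact Or.inr ⟨v, h, rfl, rfl, hm⟩
    · exact Or.inl ⟨v, h, rfl, rfl, hm⟩
  loopless := by
    constructor
    rintro x (⟨v, h, rfl, he, hm⟩ | ⟨v, h, rfl, he, hm⟩) <;> simp at he

/-- connectivity relation of a hypergraph -/
def hconn (E : Finset (Finset V)) : V → V → Prop :=
  Relation.ReflTransGen (fun u v => ∃ h ∈ E, u ∈ h ∧ v ∈ h)

end Hypergraph

instance (n : ℕ) : DecidableRel (SimpleGraph.completeGraph (Fin n)).Adj :=
  fun a b => inferInstanceAs (Decidable (a ≠ b))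

/-!
Since `A(G ⊠ Kₙ) = (A(G) + 1) ⊗ J - 1` with `J` the rank-one all-ones matrix, Sylvester's identity
`det (1 - XY) = det (1 - YX)` expresses `χ_{G ⊠ Kₙ}(x)`, for `x ≠ -1`, through `|V|`, `n` and
`χ_G ((x + 1) / n - 1)`; so cospectrality passes to the strong products.

Projecting `G ⊠ Kₙ` onto `G` does not increase distances, and a cover of `V(G)` by balls of radii
`k - 1, …, 0` can be turned greedily into a burning sequence of length at most `k`; hence
`b(G) ≤ b(G ⊠ Kₙ)`. Conversely an optimal burning sequence of `G` copied into one layer burns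
`G ⊠ Kₙ`: as its last source is redundant, every ball that is needed has radius at least `1` and
so contains the whole fibres over its `G`-ball. Thus `b(G ⊠ Kₙ) = b(G)`.
-/

open Matrix Polynomial Kronecker

namespace Matrix
variable {R : Type*} [CommRing R] {m n : Type*} [Fintype m] [DecidableEq m] [Fintype n]
  [DecidableEq n]

theorem det_one_sub_kronecker_ones (M : Matrix m m R) :
    det (1 - M ⊗ₖ of fun _ _ : n => (1 : R)) = det (1 - (Fintype.card n : R) • M) := by
  let col : Matrix n Unit R := of fun _ _ => 1
  let row : Matrix Unit n R := of fun _ _ => 1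
  have hJ : (of fun _ _ : n => (1 : R)) = col * row := by ext; simp [col, row, mul_apply]
  have hrc : row * col = (Fintype.card n : R) • (1 : Matrix Unit Unit R) := by
    ext; simp [col, row, mul_apply]
  have hUnit (A : Matrix m m R) : 1 - A ⊗ₖ (1 : Matrix Unit Unit R) = (1 - A) ⊗ₖ 1 := by
    ext ⟨i, _⟩ ⟨j, _⟩; simp [one_apply]
  rw [hJ, ← mul_one M, mul_kronecker_mul, det_one_sub_mul_comm, ← mul_kronecker_mul, hrc,
    one_mul, kronecker_smul, ← smul_kronecker, hUnit, det_kronecker]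
  simp

theorem det_smul_one_sub_smul {K : Type*} [Field K] (A : Matrix m m K) (a : K) {b : K}
    (hb : b ≠ 0) : det (a • 1 - b • A) = b ^ Fintype.card m * A.charpoly.eval (a / b) := by
  rw [eval_charpoly, ← det_smul, smul_sub, scalar_apply, ← smul_one_eq_diagonal, smul_smul,
    mul_div_cancel₀ _ hb]

end Matrix

namespace SimpleGraph

section StrongProduct
variable {α β : Type*} {G : SimpleGraph α} {H : SimpleGraph β}

theorem strongProd_adj {x y : α × β} : (G.strongProd H).Adj x y ↔
    x ≠ y ∧ (x.1 = y.1 ∨ G.Adj x.1 y.1) ∧ (x.2 = y.2 ∨ H.Adj x.2 y.2) := by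
  obtain ⟨u, i⟩ := x
  obtain ⟨v, j⟩ := y
  simp only [strongProd, ne_eq, Prod.mk.injEq]
  constructor
  · rintro (⟨rfl, h⟩ | ⟨rfl, h⟩ | ⟨h, h'⟩)
    · exact ⟨fun e => h.ne e.2, .inl rfl, .inr h⟩
    · exact ⟨fun e => h.ne e.1, .inr h, .inl rfl⟩
    · exact ⟨fun e => h.ne e.1, .inr h, .inr h'⟩
  · rintro ⟨hne, rfl | h, rfl | h'⟩
    · exact absurd ⟨rfl, rfl⟩ hne
    · exact .inl ⟨rfl, h'⟩
    · exact .inr (.inl ⟨rfl, h⟩)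
    · exact .inr (.inr ⟨h, h'⟩)

theorem Walk.exists_length_le_fst {x y : α × β} (p : (G.strongProd H).Walk x y) :
    ∃ q : G.Walk x.1 y.1, q.length ≤ p.length := by
  induction p with
  | nil => exact ⟨.nil, le_rfl⟩
  | cons h _ ih =>
    obtain ⟨q, hq⟩ := ih
    rcases (strongProd_adj.1 h).2.1 with heq | hadj
    · exact ⟨q.copy heq.symm rfl, by simpa using hq.trans (Nat.le_succ _)⟩
    · exact ⟨.cons hadj q, by simpa using hq⟩

theorem edist_fst_le_edist_strongProd (x y : α × β) :
    G.edist x.1 y.1 ≤ (G.strongProd H).edist x y := by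
  by_cases hr : (G.strongProd H).Reachable x y
  · obtain ⟨p, hp⟩ := hr.exists_walk_length_eq_edist
    obtain ⟨q, hq⟩ := p.exists_length_le_fst
    exact hp ▸ (edist_le q).trans (mod_cast hq)
  · simp [edist_eq_top_of_not_reachable hr]

theorem Walk.exists_strongProd_length_le {u v : α} {i j : β} (p : G.Walk u v) (q : H.Walk i j) :
    ∃ w : (G.strongProd H).Walk (u, i) (v, j), w.length ≤ max p.length q.length := by
  induction p generalizing i with
  | @nil u => exact ⟨q.map ⟨fun i => (u, i), fun h => Or.inl ⟨rfl, h⟩⟩, by simp⟩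
  | @cons u u' v h _ ih =>
    cases q with
    | nil =>
      obtain ⟨w, hw⟩ := ih .nil
      have hstep : (G.strongProd H).Adj (u, j) (u', j) := .inr (.inl ⟨rfl, h⟩)
      exact ⟨.cons hstep w, by simp only [Walk.length_cons, Walk.length_nil] at hw ⊢; omega⟩
    | @cons i i' j h' q =>
      obtain ⟨w, hw⟩ := ih q
      have hstep : (G.strongProd H).Adj (u, i) (u', i') := .inr (.inr ⟨h, h'⟩)
      exact ⟨.cons hstep w, by simp only [Walk.length_cons] at hw ⊢; omega⟩

theorem edist_strongProd_le (u v : α) (i j : β) :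
    (G.strongProd H).edist (u, i) (v, j) ≤ max (G.edist u v) (H.edist i j) := by
  by_cases hG : G.edist u v = ⊤
  · simp [hG]
  by_cases hH : H.edist i j = ⊤
  · simp [hH]
  obtain ⟨p, hp⟩ := exists_walk_of_edist_ne_top hG
  obtain ⟨q, hq⟩ := exists_walk_of_edist_ne_top hH
  obtain ⟨w, hw⟩ := p.exists_strongProd_length_le q
  rw [← hp, ← hq, ← Nat.mono_cast.map_max]
  exact (edist_le w).trans (mod_cast hw)

theorem edist_strongProd_top_le (u v : α) (i j : β) :
    (G.strongProd (⊤ : SimpleGraph β)).edist (u, i) (v, j) ≤ max (G.edist u v) 1 := by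
  refine (edist_strongProd_le u v i j).trans (max_le_max le_rfl ?_)
  rcases eq_or_ne i j with rfl | hij
  · simp
  · exact (edist_top_of_ne hij).le

end StrongProduct

section Burning
variable {V : Type*} (G : SimpleGraph V)

def IsBurningCover {k : ℕ} (x : Fin k → V) : Prop :=
  ⋃ l : Fin k, G.closedBall (x l) (k - 1 - l) = Set.univ

def EndsInRedundantSource {k : ℕ} (s : Fin k → V) : Prop :=
  ⋃ l ∈ {l : Fin k | (l : ℕ) < k - 1}, G.closedBall (s l) (k - 1 - l) = Set.univ

variable {G}

theorem closedBall_subset_closedBall {u v : V} {d r R : ℕ} (h : G.edist u v ≤ d)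
    (hR : d + r ≤ R) : G.closedBall v r ⊆ G.closedBall u R := fun w hw =>
  calc G.edist u w ≤ G.edist u v + G.edist v w := SimpleGraph.edist_triangle
    _ ≤ d + r := add_le_add h hw
    _ ≤ R := mod_cast hR

theorem IsBurningSeq.burningNumber_le {k : ℕ} {s : Fin k → V} (hs : G.IsBurningSeq s) :
    G.burningNumber ≤ k :=
  Nat.sInf_le ⟨s, hs⟩

theorem IsBurningSeq.isBurningCover {k : ℕ} {s : Fin k → V} (hs : G.IsBurningSeq s) :
    G.IsBurningCover s :=
  hs.2

theorem IsBurningSeq.exists_burningNumber {k : ℕ} {s : Fin k → V} (hs : G.IsBurningSeq s) :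
    ∃ t : Fin G.burningNumber → V, G.IsBurningSeq t :=
  Nat.sInf_mem (s := {m | ∃ t : Fin m → V, G.IsBurningSeq t}) ⟨k, s, hs⟩

theorem isBurningSeq_of_lt {k : ℕ} {s : Fin k → V} (hs : G.IsBurningCover s)
    (hfar : ∀ a b : Fin k, a < b → ((b - a : ℕ) : ℕ∞) ≤ G.edist (s a) (s b)) :
    G.IsBurningSeq s := by
  refine ⟨fun a b hab => ?_, hs⟩
  rcases hab.lt_or_gt with h | h
  · rw [show (((a : ℕ) : ℤ) - b).natAbs = b - a by omega]
    exact hfar a b h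
  · rw [edist_comm, show (((a : ℕ) : ℤ) - b).natAbs = a - b by omega]
    exact hfar b a h

theorem IsBurningCover.update_of_edist_lt {k : ℕ} {x : Fin k → V} (hx : G.IsBurningCover x)
    {a b : Fin k} (hab : a < b) (hnear : G.edist (x a) (x b) < ((b - a : ℕ) : ℕ∞)) (v : V) :
    G.IsBurningCover (Function.update x b v) := by
  classical
  have hsub : G.closedBall (x b) (k - 1 - b) ⊆ G.closedBall (x a) (k - 1 - a) :=
    closedBall_subset_closedBall (d := b - a - 1)
      ((ENat.le_sub_one_of_lt hnear).trans_eq (by simp)) (by omega)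
  refine Set.eq_univ_of_univ_subset fun w _ => ?_
  obtain ⟨l, hl⟩ := Set.mem_iUnion.1 (hx.symm ▸ Set.mem_univ w)
  by_cases hlb : l = b
  · subst hlb
    exact Set.mem_iUnion.2 ⟨a, by rw [Function.update_of_ne hab.ne]; exact hsub hl⟩
  · exact Set.mem_iUnion.2 ⟨l, by rwa [Function.update_of_ne hlb]⟩

theorem exists_far_of_not_isBurningCover {k m : ℕ} (hm : m ≤ k) (y : Fin k → V)
    (hy : ¬ G.IsBurningCover fun l : Fin m => y (Fin.castLE hm l)) :
    ∃ v, ∀ a : Fin k, (a : ℕ) < m → ((m - a : ℕ) : ℕ∞) ≤ G.edist (y a) v := by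
  obtain ⟨v, hv⟩ : ∃ v, v ∉ ⋃ l : Fin m, G.closedBall (y (Fin.castLE hm l)) (m - 1 - l) := by
    by_contra! h
    exact hy (Set.eq_univ_of_univ_subset fun w _ => h w)
  refine ⟨v, fun a ha => ?_⟩
  have hfresh : ¬ G.edist (y a) v ≤ ((m - 1 - a : ℕ) : ℕ∞) := fun h =>
    hv (Set.mem_iUnion.2 ⟨⟨a, ha⟩, h⟩)
  exact (show m - a = m - 1 - a + 1 by omega) ▸ Order.add_one_le_of_lt (not_le.1 hfresh)

/-- Greedy repair of a shortest cover: a source lying too close to an earlier one is useless, so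
it is moved to a vertex not yet burnt at its time, which exists by minimality. -/
theorem IsBurningCover.exists_far_prefix {k : ℕ} {x : Fin k → V} (hx : G.IsBurningCover x)
    (hmin : ∀ m < k, ∀ z : Fin m → V, ¬ G.IsBurningCover z) (m : ℕ) (hm : m ≤ k) :
    ∃ y : Fin k → V, G.IsBurningCover y ∧
      ∀ a b : Fin k, a < b → (b : ℕ) < m → ((b - a : ℕ) : ℕ∞) ≤ G.edist (y a) (y b) := by
  classical
  induction m with
  | zero => exact ⟨x, hx, fun _ _ _ h => absurd h (Nat.not_lt_zero _)⟩
  | succ m ih =>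
    obtain ⟨y, hy, hfar⟩ := ih (by omega)
    set c : Fin k := ⟨m, hm⟩
    by_cases hc : ∀ a < c, ((m - a : ℕ) : ℕ∞) ≤ G.edist (y a) (y c)
    · refine ⟨y, hy, fun a b hab hb => ?_⟩
      rcases (Nat.lt_succ_iff.1 hb).lt_or_eq with hb | hb
      · exact hfar a b hab hb
      · obtain rfl : b = c := Fin.ext hb
        exact hc a hab
    push Not at hc
    obtain ⟨a, hac, hnear⟩ := hc
    obtain ⟨v, hv⟩ := exists_far_of_not_isBurningCover (by omega) y (hmin m (by omega) _)
    refine ⟨Function.update y c v, hy.update_of_edist_lt hac hnear v, fun a' b hab hb => ?_⟩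
    have hcm : (c : ℕ) = m := rfl
    rw [Function.update_of_ne (Fin.ne_of_val_ne (by omega))]
    rcases (Nat.lt_succ_iff.1 hb).lt_or_eq with hb | hb
    · rw [Function.update_of_ne (Fin.ne_of_val_ne (by omega))]
      exact hfar a' b hab hb
    · obtain rfl : b = c := Fin.ext hb
      rw [Function.update_self]
      exact hv a' hab

theorem IsBurningCover.burningNumber_le {k : ℕ} {x : Fin k → V} (hx : G.IsBurningCover x) :
    G.burningNumber ≤ k := by
  classical
  have hex : ∃ m, ∃ z : Fin m → V, G.IsBurningCover z := ⟨k, x, hx⟩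
  obtain ⟨z, hz⟩ := Nat.find_spec hex
  obtain ⟨y, hy, hfar⟩ :=
    hz.exists_far_prefix (fun m hm z hz => Nat.find_min hex hm ⟨z, hz⟩) _ le_rfl
  calc G.burningNumber ≤ Nat.find hex :=
        (isBurningSeq_of_lt hy fun a b hab => hfar a b hab b.isLt).burningNumber_le
    _ ≤ k := Nat.find_min' hex ⟨x, hx⟩

end Burning

section BurningStrongProduct
variable {α β : Type*} {G : SimpleGraph α} {H : SimpleGraph β}

theorem IsBurningCover.fst_of_strongProd [Nonempty β] {k : ℕ} {t : Fin k → α × β}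
    (ht : (G.strongProd H).IsBurningCover t) : G.IsBurningCover (Prod.fst ∘ t) := by
  rw [IsBurningCover]
  refine Set.eq_univ_of_univ_subset fun u _ => ?_
  obtain ⟨l, hl⟩ := Set.mem_iUnion.1 (ht.symm ▸ Set.mem_univ (u, Classical.arbitrary β))
  exact Set.mem_iUnion.2 ⟨l, (edist_fst_le_edist_strongProd (t l) _).trans hl⟩

theorem burningNumber_le_burningNumber_strongProd [Nonempty β] {k : ℕ} {t : Fin k → α × β}
    (ht : (G.strongProd H).IsBurningSeq t) :
    G.burningNumber ≤ (G.strongProd H).burningNumber := by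
  obtain ⟨t', ht'⟩ := ht.exists_burningNumber
  exact ht'.isBurningCover.fst_of_strongProd.burningNumber_le

theorem IsBurningSeq.strongProd_top {k : ℕ} {s : Fin k → α} (hs : G.IsBurningSeq s)
    (hred : G.EndsInRedundantSource s) (j : β) :
    (G.strongProd (⊤ : SimpleGraph β)).IsBurningSeq fun l => (s l, j) := by
  refine ⟨fun a b hab => (hs.1 a b hab).trans (edist_fst_le_edist_strongProd _ _), ?_⟩
  refine Set.eq_univ_of_univ_subset fun ⟨u, i⟩ _ => ?_
  obtain ⟨l, hl, hu⟩ := Set.mem_iUnion₂.1 (hred.symm ▸ Set.mem_univ u)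
  have hl : 1 ≤ k - 1 - (l : ℕ) := by simp only [Set.mem_ofPred_eq] at hl; omega
  exact Set.mem_iUnion.2 ⟨l, (edist_strongProd_top_le _ _ _ _).trans
    (max_le hu (mod_cast hl))⟩

theorem burningNumber_strongProd_top [Nonempty β]
    (hG : ∃ s : Fin G.burningNumber → α, G.IsBurningSeq s ∧ G.EndsInRedundantSource s) :
    (G.strongProd (⊤ : SimpleGraph β)).burningNumber = G.burningNumber := by
  obtain ⟨s, hs, hred⟩ := hG
  have hprod := hs.strongProd_top hred (Classical.arbitrary β)
  exact le_antisymm hprod.burningNumber_le (burningNumber_le_burningNumber_strongProd hprod)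

end BurningStrongProduct

section Spectrum
variable {α β : Type*} [DecidableEq α] [DecidableEq β] (G : SimpleGraph α) [DecidableRel G.Adj]
  [DecidableRel (G.strongProd (⊤ : SimpleGraph β)).Adj]

theorem adjMatrix_strongProd_top {R : Type*} [Ring R] :
    (G.strongProd (⊤ : SimpleGraph β)).adjMatrix R =
      (G.adjMatrix R + 1) ⊗ₖ of (fun _ _ : β => (1 : R)) - 1 := by
  ext ⟨u, i⟩ ⟨v, j⟩
  by_cases huv : u = v
  · subst huv
    by_cases hij : i = j <;> simp [strongProd_adj, hij, one_apply]
  · by_cases h : G.Adj u v <;> simp [strongProd_adj, huv, h, one_apply]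

variable [Fintype α] [Fintype β]

theorem eval_charpoly_adjMatrix_strongProd_top [Nonempty β] {x : ℂ} (hx : x + 1 ≠ 0) :
    ((G.strongProd (⊤ : SimpleGraph β)).adjMatrix ℂ).charpoly.eval x =
      (x + 1) ^ (Fintype.card α * Fintype.card β) * (Fintype.card β / (x + 1)) ^ Fintype.card α *
        (G.adjMatrix ℂ).charpoly.eval ((x + 1) / Fintype.card β - 1) := by
  set c := x + 1
  set t : ℂ := Fintype.card β / c
  have ht : t ≠ 0 := div_ne_zero (Nat.cast_ne_zero.2 Fintype.card_ne_zero) hx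
  have hsplit : scalar (α × β) x - (G.strongProd ⊤).adjMatrix ℂ =
      c • (1 - (c⁻¹ • (G.adjMatrix ℂ + 1)) ⊗ₖ of fun _ _ : β => (1 : ℂ)) := by
    rw [adjMatrix_strongProd_top, scalar_apply, ← smul_one_eq_diagonal, smul_kronecker, smul_sub,
      smul_smul, mul_inv_cancel₀ hx, one_smul]
    simp only [c, add_smul, one_smul]
    abel
  have hrescale : (1 : Matrix α α ℂ) - (Fintype.card β : ℂ) • c⁻¹ • (G.adjMatrix ℂ + 1) =
      (1 - t) • 1 - t • G.adjMatrix ℂ := by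
    rw [smul_smul, ← div_eq_mul_inv, smul_add, sub_smul, one_smul, smul_one_eq_diagonal]
    abel
  have hpoint : (1 - t) / t = c / Fintype.card β - 1 := by
    have : (Fintype.card β : ℂ) ≠ 0 := Nat.cast_ne_zero.2 Fintype.card_ne_zero
    simp only [t]
    field_simp
  rw [eval_charpoly, hsplit, det_smul, det_one_sub_kronecker_ones, hrescale,
    det_smul_one_sub_smul _ _ ht, Fintype.card_prod, hpoint, mul_assoc]

theorem charpoly_adjMatrix_strongProd_top_eq {γ : Type*} [Fintype γ] [DecidableEq γ]
    (H : SimpleGraph γ) [DecidableRel H.Adj] [DecidableRel (H.strongProd (⊤ : SimpleGraph β)).Adj]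
    (hGH : (G.adjMatrix ℂ).charpoly = (H.adjMatrix ℂ).charpoly) :
    ((G.strongProd (⊤ : SimpleGraph β)).adjMatrix ℂ).charpoly =
      ((H.strongProd (⊤ : SimpleGraph β)).adjMatrix ℂ).charpoly := by
  rcases isEmpty_or_nonempty β
  · simp [charpoly, det_isEmpty]
  have hcard : Fintype.card α = Fintype.card γ := by
    rw [← charpoly_natDegree_eq_dim (G.adjMatrix ℂ), hGH, charpoly_natDegree_eq_dim]
  refine eq_of_infinite_eval_eq _ _ ((Set.finite_singleton (-1 : ℂ)).infinite_compl.mono ?_)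
  intro x hx1
  have hx : x + 1 ≠ 0 := fun h => hx1 (eq_neg_of_add_eq_zero_left h)
  rw [Set.mem_ofPred_eq, eval_charpoly_adjMatrix_strongProd_top G hx,
    eval_charpoly_adjMatrix_strongProd_top H hx, hGH, hcard]

end Spectrum

end SimpleGraph

/-- If `G` and `H` are cospectral with different burning numbers and each has an optimal
burning sequence ending in a redundant source, then for every `n ≥ 2` the strong products
`G ⊠ K_n` and `H ⊠ K_n` are cospectral with different burning numbers. -/
theorem stmt17 {α β : Type*} [Fintype α] [Fintype β] [DecidableEq α] [DecidableEq β]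
    (G : SimpleGraph α) (H : SimpleGraph β) [DecidableRel G.Adj] [DecidableRel H.Adj]
    (hco : (G.adjMatrix ℂ).charpoly = (H.adjMatrix ℂ).charpoly)
    (hne : G.burningNumber ≠ H.burningNumber)
    (hG : ∃ s : Fin G.burningNumber → α, G.IsBurningSeq s ∧
      (⋃ l ∈ {l : Fin G.burningNumber | (l : ℕ) < G.burningNumber - 1},
        G.closedBall (s l) (G.burningNumber - 1 - (l : ℕ))) = Set.univ)
    (hH : ∃ s : Fin H.burningNumber → β, H.IsBurningSeq s ∧
      (⋃ l ∈ {l : Fin H.burningNumber | (l : ℕ) < H.burningNumber - 1},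
        H.closedBall (s l) (H.burningNumber - 1 - (l : ℕ))) = Set.univ) :
    ∀ n : ℕ, 2 ≤ n →
      (((G.strongProd (SimpleGraph.completeGraph (Fin n))).adjMatrix ℂ).charpoly =
        ((H.strongProd (SimpleGraph.completeGraph (Fin n))).adjMatrix ℂ).charpoly) ∧
      (G.strongProd (SimpleGraph.completeGraph (Fin n))).burningNumber ≠
        (H.strongProd (SimpleGraph.completeGraph (Fin n))).burningNumber := by
  intro n hn
  have : Nonempty (Fin n) := ⟨⟨0, by omega⟩⟩
  refine ⟨G.charpoly_adjMatrix_strongProd_top_eq H hco, ?_⟩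
  rwa [SimpleGraph.burningNumber_strongProd_top hG, SimpleGraph.burningNumber_strongProd_top hH]
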